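/- With τ*_N(σ_X², σ_Z²) defined as the solution of the fixed point equation λ((N−1)/N) E[Φ(((1−α)τ* − σ̃W)/σ_Z)] = α τ* (notation as above), for every fixed σ_Z² > 0 one has lim_{σ_X² → ∞} τ*_N = (λ/2)(1 − 1/N). -/

import Mathlib

/-!
Since `Φ` is `1/2`-Lipschitz and `E[Φ(bW)] = 1/2` for every `b` by the symmetry of `W`, the
Gaussian average `I` in the fixed point equation lies within `|(1-α)τ*/σ_Z|/2` of `1/2`.
With `K = λ(N-1)/N`, the equation `ατ* = K I`, `|I| ≤ 1` and `α → 1` keep `τ*` bounded, so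
`(1-α)τ* → 0`, hence `I → 1/2` and `τ* = K I/α → K/2`.
-/

open MeasureTheory ProbabilityTheory Filter

/-- The standard Gaussian CDF `Φ`. -/
noncomputable def stdGaussianCDF (x : ℝ) : ℝ :=
  (gaussianReal 0 1 (Set.Iic x)).toReal

open Real Set Topology
open scoped NNReal

lemma stdGaussianCDF_eq_cdf : stdGaussianCDF = cdf (gaussianReal 0 1) :=
  funext fun x => (cdf_eq_real _ x).symm

lemma gaussianPDFReal_le_inv_sqrt (m : ℝ) (v : ℝ≥0) (x : ℝ) :
    gaussianPDFReal m v x ≤ (√(2 * π * v))⁻¹ := by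
  rw [gaussianPDFReal_def]
  refine mul_le_of_le_one_right (by positivity) (exp_le_one_iff.2 ?_)
  exact div_nonpos_of_nonpos_of_nonneg (neg_nonpos.2 (sq_nonneg _)) (by positivity)

lemma inv_sqrt_two_pi_le_half : (√(2 * π))⁻¹ ≤ 1 / 2 := by
  rw [one_div, inv_le_inv₀ (by positivity) two_pos, le_sqrt two_pos.le (by positivity)]
  nlinarith [pi_gt_three]

lemma gaussianReal_Ioc_le (m : ℝ) {v : ℝ≥0} (hv : v ≠ 0) (a b : ℝ) :
    gaussianReal m v (Ioc a b) ≤ ENNReal.ofReal ((√(2 * π * v))⁻¹ * (b - a)) := by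
  rw [gaussianReal_apply m hv, ENNReal.ofReal_mul (by positivity), ← Real.volume_Ioc,
    ← setLIntegral_const]
  exact setLIntegral_mono measurable_const fun x _ =>
    ENNReal.ofReal_le_ofReal (gaussianPDFReal_le_inv_sqrt m v x)

lemma stdGaussianCDF_sub_le {x y : ℝ} (hxy : y ≤ x) :
    stdGaussianCDF x - stdGaussianCDF y ≤ (x - y) / 2 := by
  have h := gaussianReal_Ioc_le 0 one_ne_zero y x
  rw [← measure_cdf (gaussianReal 0 1), StieltjesFunction.measure_Ioc,
    ENNReal.ofReal_le_ofReal_iff (by positivity), NNReal.coe_one, mul_one] at h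
  rw [stdGaussianCDF_eq_cdf]
  calc _ ≤ _ := h
    _ ≤ 1 / 2 * (x - y) := mul_le_mul_of_nonneg_right inv_sqrt_two_pi_le_half (sub_nonneg.2 hxy)
    _ = (x - y) / 2 := by ring

lemma lipschitzWith_stdGaussianCDF : LipschitzWith 2⁻¹ stdGaussianCDF := by
  refine LipschitzWith.of_le_add_mul _ fun x y => ?_
  rcases le_total x y with hxy | hyx
  · have := stdGaussianCDF_eq_cdf ▸ monotone_cdf (gaussianReal 0 1) hxy
    nlinarith [dist_nonneg (x := x) (y := y)]
  · have := stdGaussianCDF_sub_le hyx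
    rw [dist_eq, abs_of_nonneg (sub_nonneg.2 hyx)]
    push_cast
    linarith

lemma continuous_stdGaussianCDF : Continuous stdGaussianCDF :=
  lipschitzWith_stdGaussianCDF.continuous

lemma stdGaussianCDF_add_stdGaussianCDF_neg (x : ℝ) :
    stdGaussianCDF x + stdGaussianCDF (-x) = 1 := by
  have : NullSingletonClass (gaussianReal 0 1) := nullSingletonClass_gaussianReal one_ne_zero
  have hneg : gaussianReal 0 1 (Iic (-x)) = gaussianReal 0 1 (Ici x) := by
    conv_lhs => rw [← neg_zero, ← gaussianReal_map_neg]
    rw [Measure.map_apply measurable_neg measurableSet_Iic, Set.neg_preimage, Set.neg_Iic, neg_neg]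
  have hIio : gaussianReal 0 1 (Iio x) = gaussianReal 0 1 (Iic x) := measure_congr Iio_ae_eq_Iic
  simp only [stdGaussianCDF, hneg, ← hIio, ← measureReal_def]
  rw [← compl_Ici, probReal_compl_eq_one_sub measurableSet_Ici]
  ring

lemma norm_stdGaussianCDF_le_one (x : ℝ) : ‖stdGaussianCDF x‖ ≤ 1 := by
  rw [stdGaussianCDF_eq_cdf, norm_of_nonneg (cdf_nonneg _ _)]
  exact cdf_le_one _ x

lemma integrable_stdGaussianCDF_comp {α : Type*} [MeasurableSpace α] (μ : Measure α)
    [IsFiniteMeasure μ] {g : α → ℝ} (hg : Measurable g) :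
    Integrable (fun x => stdGaussianCDF (g x)) μ :=
  .of_bound (continuous_stdGaussianCDF.measurable.comp hg).aestronglyMeasurable 1
    (ae_of_all _ fun x => norm_stdGaussianCDF_le_one (g x))

lemma abs_integral_stdGaussianCDF_comp_le_one {α : Type*} [MeasurableSpace α] (μ : Measure α)
    [IsProbabilityMeasure μ] (g : α → ℝ) : |∫ x, stdGaussianCDF (g x) ∂μ| ≤ 1 := by
  simpa using norm_integral_le_of_norm_le_const (μ := μ)
    (ae_of_all _ fun x => norm_stdGaussianCDF_le_one (g x))

lemma integral_stdGaussianCDF_mul_gaussianReal (v : ℝ≥0) (b : ℝ) :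
    ∫ w, stdGaussianCDF (b * w) ∂gaussianReal 0 v = 1 / 2 := by
  have hsymm : ∫ w, stdGaussianCDF (b * -w) ∂gaussianReal 0 v
      = ∫ w, stdGaussianCDF (b * w) ∂gaussianReal 0 v := by
    conv_rhs => rw [← neg_zero, ← gaussianReal_map_neg]
    exact (integral_map (φ := fun x => -x) measurable_neg.aemeasurable
      (continuous_stdGaussianCDF.comp (continuous_const_mul b)).aestronglyMeasurable).symm
  have hsum : ∫ w, stdGaussianCDF (b * w) ∂gaussianReal 0 v
      + ∫ w, stdGaussianCDF (b * -w) ∂gaussianReal 0 v = 1 := by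
    rw [← integral_add (integrable_stdGaussianCDF_comp _ (measurable_const_mul b))
      (integrable_stdGaussianCDF_comp _ (g := fun w => b * -w) (by fun_prop))]
    simp [mul_neg, stdGaussianCDF_add_stdGaussianCDF_neg]
  linarith

lemma abs_integral_stdGaussianCDF_sub_half_le (v : ℝ≥0) (a b : ℝ) :
    |∫ w, stdGaussianCDF (a - b * w) ∂gaussianReal 0 v - 1 / 2| ≤ |a| / 2 := by
  rw [← integral_stdGaussianCDF_mul_gaussianReal v (-b),
    ← integral_sub (integrable_stdGaussianCDF_comp _ (g := fun w => a - b * w) (by fun_prop))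
      (integrable_stdGaussianCDF_comp _ (measurable_const_mul (-b)))]
  calc ‖∫ w, (stdGaussianCDF (a - b * w) - stdGaussianCDF (-b * w)) ∂gaussianReal 0 v‖
      ≤ 2⁻¹ * |a| * (gaussianReal 0 v).real univ :=
        norm_integral_le_of_norm_le_const <| ae_of_all _ fun w => by
          simpa [dist_eq] using lipschitzWith_stdGaussianCDF.dist_le_mul (a - b * w) (-b * w)
    _ = |a| / 2 := by simp [div_eq_inv_mul]

section FixedPoint

variable {ι : Type*} {l : Filter ι} {α ε τ I : ι → ℝ} {K : ℝ}

lemma tendsto_of_mul_eq_mul_of_abs_sub_half_le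
    (hα : Tendsto α l (𝓝 1)) (hε : Tendsto ε l (𝓝 0))
    (hfix : ∀ᶠ i in l, α i * τ i = K * I i) (hI : ∀ᶠ i in l, |I i| ≤ 1)
    (hIε : ∀ᶠ i in l, |I i - 1 / 2| ≤ ε i * |τ i|) :
    Tendsto τ l (𝓝 (K / 2)) := by
  have hτ : ∀ᶠ i in l, |τ i| ≤ 2 * |K| := by
    filter_upwards [hfix, hI, hα.eventually (lt_mem_nhds (by norm_num : (1 / 2 : ℝ) < 1))]
      with i hfix hI hα
    have : |α i| * |τ i| ≤ |K| * 1 := by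
      rw [← abs_mul, hfix, abs_mul]; gcongr
    rw [abs_of_pos (by linarith)] at this
    nlinarith [abs_nonneg (τ i), abs_nonneg K]
  have hI : Tendsto I l (𝓝 (1 / 2)) := by
    rw [tendsto_iff_norm_sub_tendsto_zero]
    refine squeeze_zero' (.of_forall fun i => norm_nonneg _) ?_
      ((hε.abs.mul_const (2 * |K|)).trans (by simp))
    filter_upwards [hIε, hτ] with i hIε hτ
    calc ‖I i - 1 / 2‖ ≤ ε i * |τ i| := hIε
      _ ≤ |ε i| * (2 * |K|) := mul_le_mul (le_abs_self _) hτ (abs_nonneg _) (abs_nonneg _)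
  have hα0 : ∀ᶠ i in l, α i ≠ 0 := hα.eventually_ne one_ne_zero
  refine ((hI.const_mul K).div hα one_ne_zero).congr' ?_ |>.trans (by norm_num [div_eq_mul_inv])
  filter_upwards [hfix, hα0] with i hfix hα0
  simp only [Pi.div_apply, ← hfix, mul_div_cancel_left₀ _ hα0]

end FixedPoint

lemma tendsto_div_add_const_atTop (c : ℝ) :
    Tendsto (fun s : ℝ => s / (s + c)) atTop (𝓝 1) := by
  have h : Tendsto (fun s : ℝ => 1 - c / (s + c)) atTop (𝓝 (1 - 0)) := tendsto_const_nhds.sub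
    (tendsto_const_nhds.div_atTop (tendsto_atTop_add_const_right _ c tendsto_id))
  rw [sub_zero] at h
  refine h.congr' ?_
  filter_upwards [eventually_gt_atTop (-c)] with s hs
  field_simp [(by linarith : s + c ≠ 0)]
  ring

theorem stmt14_general (σZ lam : ℝ)
    (N : ℕ) (hN : 2 ≤ N) (τ : ℝ → ℝ)
    (hfix : ∀ s : ℝ, 0 < s →
      lam * ((N - 1 : ℝ) / N) *
          ∫ w, stdGaussianCDF
              (((1 - s / (s + σZ ^ 2)) * τ s
                - Real.sqrt ((s / (s + σZ ^ 2)) * σZ ^ 2) * w) / σZ)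
            ∂(gaussianReal 0 1)
        = (s / (s + σZ ^ 2)) * τ s) :
    Tendsto τ atTop (nhds ((lam / 2) * (1 - 1 / N))) := by
  have hα := tendsto_div_add_const_atTop (σZ ^ 2)
  have hε : Tendsto (fun s => |1 - s / (s + σZ ^ 2)| / (2 * |σZ|)) atTop (𝓝 0) := by
    simpa using (hα.const_sub 1).abs.div_const (2 * |σZ|)
  have hlim : lam / 2 * (1 - 1 / N) = lam * ((N - 1) / N) / 2 := by
    field_simp [(by norm_cast; omega : (N : ℝ) ≠ 0)]
  rw [hlim]
  refine tendsto_of_mul_eq_mul_of_abs_sub_half_le hα hε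
    ((eventually_gt_atTop 0).mono fun s hs => (hfix s hs).symm)
    (.of_forall fun s => abs_integral_stdGaussianCDF_comp_le_one _ _) (.of_forall fun s => ?_)
  set α := s / (s + σZ ^ 2)
  have hlin (w : ℝ) : ((1 - α) * τ s - √(α * σZ ^ 2) * w) / σZ
      = (1 - α) * τ s / σZ - √(α * σZ ^ 2) / σZ * w := by ring
  calc _ ≤ |(1 - α) * τ s / σZ| / 2 := by
        simp only [hlin]; exact abs_integral_stdGaussianCDF_sub_half_le 1 _ _
    _ = |1 - α| / (2 * |σZ|) * |τ s| := by rw [abs_div, abs_mul]; ring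

/-- Diffuse Gaussian prior limit: let `τ : ℝ → ℝ` assign to each prior variance
`s = σX² > 0` a solution `τ s = τ*_N` of the fixed point equation
`λ((N-1)/N) E[Φ(((1-α)τ* - σ̃W)/σ_Z)] = α τ*`, where `α = s/(s+σZ²)`, `σ̃² = α σZ²`,
`W ~ N(0,1)`. Then `τ s → (λ/2)(1 - 1/N)` as `s = σX² → ∞`. -/
theorem stmt14 (σZ lam : ℝ) (hσZ : 0 < σZ) (hlam : 0 < lam)
    (N : ℕ) (hN : 2 ≤ N) (τ : ℝ → ℝ)
    (hfix : ∀ s : ℝ, 0 < s →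
      lam * ((N - 1 : ℝ) / N) *
          ∫ w, stdGaussianCDF
              (((1 - s / (s + σZ ^ 2)) * τ s
                - Real.sqrt ((s / (s + σZ ^ 2)) * σZ ^ 2) * w) / σZ)
            ∂(gaussianReal 0 1)
        = (s / (s + σZ ^ 2)) * τ s) :
    Tendsto τ atTop (nhds ((lam / 2) * (1 - 1 / N))) :=
  stmt14_general σZ lam N hN τ hfix
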